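/- The marginal value of an extra high-level advertisement grows with the horizon: Fix an initial reputation R_1 ∈ [0,1] and an integer j ≥ 0. For N ≥ j, let Π_N(j) denote the full-fill total profit over horizon N of the single-switch sequence with A_i = H for i ≤ j and A_i = L for j < i ≤ N, started from R_1. Then for all N, N' with j+1 ≤ N ≤ N', Π_{N'}(j+1) − Π_{N'}(j) ≥ Π_N(j+1) − Π_N(j). In particular, if switching from high to low advertisement one period later is at least as profitable at horizon N, it remains so at every longer horizon. -/

import Mathlib

/-! Raising the advertisement from `switchSeq L H j` to `switchSeq L H (j + 1)` raises the
reputation in every period, because the post-advertisement map, the demand and the full-fill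
reputation update are all monotone (as long as reputations stay at most `1`). From period `j + 1`
on both sequences advertise at level `L`, so every period profit there is at least as large under
the later switch, and lengthening the horizon only adds such nonnegative differences. -/

noncomputable section

/-- Post-advertisement reputation map. -/
def frep (α R a : ℝ) : ℝ := R + (1 - R) * a ^ α

/-- Demand function. -/
def dem (Λ q x : ℝ) : ℝ := if 0 < x then max 0 (Λ * (1 - q / x)) else 0

/-- Full-fill reputation trajectory (0-indexed periods). -/
def rep (α w Λ q : ℝ) (A : ℕ → ℝ) (R1 : ℝ) : ℕ → ℝ
  | 0 => R1
  | i + 1 =>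
      let R' := frep α (rep α w Λ q A R1 i) (A i)
      if 0 < dem Λ q R' then (1 - w) * R' + w else R'

/-- Full-fill total profit over horizon `N`. -/
def profit (α w Λ q p c cA : ℝ) (A : ℕ → ℝ) (R1 : ℝ) (N : ℕ) : ℝ :=
  ∑ i ∈ Finset.range N,
    ((p - c) * dem Λ q (frep α (rep α w Λ q A R1 i) (A i)) - cA * A i)

/-- The single-switch advertisement sequence: `H` in the first `j` periods
(0-indexed periods `0,…,j−1`), `L` afterwards. -/
def switchSeq (L H : ℝ) (j : ℕ) : ℕ → ℝ := fun i => if i < j then H else L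

lemma dem_nonneg (Λ q x : ℝ) : 0 ≤ dem Λ q x := by
  unfold dem
  split_ifs
  exacts [le_max_left _ _, le_rfl]

lemma dem_mono {Λ q : ℝ} (hΛ : 0 ≤ Λ) (hq : 0 ≤ q) : Monotone (dem Λ q) := by
  intro x y hxy
  by_cases hx : 0 < x
  · have hy : 0 < y := hx.trans_le hxy
    simp only [dem, if_pos hx, if_pos hy]
    gcongr
  · simp only [dem, if_neg hx]
    exact dem_nonneg Λ q y

section frep

variable {α R R' a a' : ℝ}

lemma frep_le_one (hα : 0 ≤ α) (hR : R ≤ 1) (ha : 0 ≤ a) (ha1 : a ≤ 1) : frep α R a ≤ 1 := by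
  have : a ^ α ≤ 1 := Real.rpow_le_one ha ha1 hα
  unfold frep
  nlinarith

lemma frep_le_frep (hα : 0 ≤ α) (hRR' : R ≤ R') (hR' : R' ≤ 1)
    (ha : 0 ≤ a) (haa' : a ≤ a') (ha' : a' ≤ 1) : frep α R a ≤ frep α R' a' := by
  have h_le : a ^ α ≤ a' ^ α := Real.rpow_le_rpow ha haa' hα
  have h_le_one : a ^ α ≤ 1 := h_le.trans (Real.rpow_le_one (ha.trans haa') ha' hα)
  unfold frep
  nlinarith

end frep

def fullFillStep (w Λ q R' : ℝ) : ℝ := if 0 < dem Λ q R' then (1 - w) * R' + w else R'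

section fullFillStep

variable {w Λ q x y : ℝ}

lemma fullFillStep_le_one (hw1 : w ≤ 1) (hx : x ≤ 1) : fullFillStep w Λ q x ≤ 1 := by
  unfold fullFillStep
  split_ifs <;> nlinarith

lemma fullFillStep_le_fullFillStep (hΛ : 0 ≤ Λ) (hq : 0 ≤ q) (hw0 : 0 ≤ w) (hw1 : w ≤ 1)
    (hxy : x ≤ y) (hy : y ≤ 1) : fullFillStep w Λ q x ≤ fullFillStep w Λ q y := by
  have hdem : dem Λ q x ≤ dem Λ q y := dem_mono hΛ hq hxy
  unfold fullFillStep
  split_ifs with hx hy' <;> nlinarith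

end fullFillStep

section rep

variable {α w Λ q R1 : ℝ} {A A' : ℕ → ℝ}

lemma rep_succ (i : ℕ) :
    rep α w Λ q A R1 (i + 1) = fullFillStep w Λ q (frep α (rep α w Λ q A R1 i) (A i)) :=
  rfl

lemma rep_le_one (hα : 0 ≤ α) (hw1 : w ≤ 1) (hA0 : ∀ i, 0 ≤ A i) (hA1 : ∀ i, A i ≤ 1)
    (hR1 : R1 ≤ 1) (i : ℕ) : rep α w Λ q A R1 i ≤ 1 := by
  induction i with
  | zero => exact hR1
  | succ i ih => exact fullFillStep_le_one hw1 (frep_le_one hα ih (hA0 i) (hA1 i))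

lemma rep_le_rep (hα : 0 ≤ α) (hΛ : 0 ≤ Λ) (hq : 0 ≤ q) (hw0 : 0 ≤ w) (hw1 : w ≤ 1)
    (hA0 : ∀ i, 0 ≤ A i) (hAA' : ∀ i, A i ≤ A' i) (hA'1 : ∀ i, A' i ≤ 1) (hR1 : R1 ≤ 1)
    (i : ℕ) : rep α w Λ q A R1 i ≤ rep α w Λ q A' R1 i := by
  have hA'0 i : 0 ≤ A' i := (hA0 i).trans (hAA' i)
  induction i with
  | zero => exact le_rfl
  | succ i ih =>
    have hrep' := rep_le_one (Λ := Λ) (q := q) hα hw1 hA'0 hA'1 hR1 i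
    rw [rep_succ, rep_succ]
    exact fullFillStep_le_fullFillStep hΛ hq hw0 hw1
      (frep_le_frep hα ih hrep' (hA0 i) (hAA' i) (hA'1 i))
      (frep_le_one hα hrep' (hA'0 i) (hA'1 i))

end rep

lemma profit_sub_profit_le_of_eq_from {α w Λ q p c cA R1 : ℝ} {A A' : ℕ → ℝ} {N N' : ℕ}
    (hα : 0 ≤ α) (hΛ : 0 ≤ Λ) (hq : 0 ≤ q) (hw0 : 0 ≤ w) (hw1 : w ≤ 1) (hcp : c ≤ p)
    (hA0 : ∀ i, 0 ≤ A i) (hAA' : ∀ i, A i ≤ A' i) (hA'1 : ∀ i, A' i ≤ 1) (hR1 : R1 ≤ 1)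
    (h_eq : ∀ i, N ≤ i → A i = A' i) (hNN' : N ≤ N') :
    profit α w Λ q p c cA A' R1 N - profit α w Λ q p c cA A R1 N ≤
      profit α w Λ q p c cA A' R1 N' - profit α w Λ q p c cA A R1 N' := by
  have h_tail : ∀ i ∈ Finset.Ico N N',
      (p - c) * dem Λ q (frep α (rep α w Λ q A R1 i) (A i)) - cA * A i ≤
        (p - c) * dem Λ q (frep α (rep α w Λ q A' R1 i) (A' i)) - cA * A' i := by
    intro i hi
    have hA'0 i : 0 ≤ A' i := (hA0 i).trans (hAA' i)
    rw [h_eq i (Finset.mem_Ico.mp hi).1]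
    gcongr ?_ - _
    refine mul_le_mul_of_nonneg_left (dem_mono hΛ hq ?_) (sub_nonneg.mpr hcp)
    exact frep_le_frep hα (rep_le_rep hα hΛ hq hw0 hw1 hA0 hAA' hA'1 hR1 i)
      (rep_le_one hα hw1 hA'0 hA'1 hR1 i) (hA'0 i) le_rfl (hA'1 i)
  have h_sum := Finset.sum_le_sum h_tail
  simp only [profit, ← Finset.sum_range_add_sum_Ico _ hNN']
  linarith

section switchSeq

variable {L H : ℝ}

lemma switchSeq_le_switchSeq (hLH : L ≤ H) {j k : ℕ} (hjk : j ≤ k) (i : ℕ) :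
    switchSeq L H j i ≤ switchSeq L H k i := by
  unfold switchSeq
  split_ifs <;> first | exact le_rfl | exact hLH | omega

lemma switchSeq_of_le {j i : ℕ} (hji : j ≤ i) : switchSeq L H j i = L :=
  if_neg (Nat.not_lt.mpr hji)

lemma switchSeq_mem_Icc (hLH : L ≤ H) (j i : ℕ) : switchSeq L H j i ∈ Set.Icc L H := by
  unfold switchSeq
  split_ifs
  exacts [⟨hLH, le_rfl⟩, ⟨le_rfl, hLH⟩]

end switchSeq

theorem marginal_value_of_high_ad_grows_with_horizon_general
    (Λ c p cA m u α w L H R1 q : ℝ)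
    (hΛ : 0 < Λ) (hc : 0 < c) (hcp : c < p)
    (hm : 0 < m) (hu : 0 ≤ u) (hqdef : q = (u + p) / m)
    (hα : 0 < α) (hw0 : 0 ≤ w) (hw1 : w ≤ 1)
    (hL0 : 0 ≤ L) (hLH : L < H) (hH1 : H ≤ 1)
    (hR11 : R1 ≤ 1)
    (j N N' : ℕ) (hjN : j + 1 ≤ N) (hNN' : N ≤ N') :
    profit α w Λ q p c cA (switchSeq L H (j + 1)) R1 N -
        profit α w Λ q p c cA (switchSeq L H j) R1 N ≤
      profit α w Λ q p c cA (switchSeq L H (j + 1)) R1 N' -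
        profit α w Λ q p c cA (switchSeq L H j) R1 N' := by
  have hq : 0 ≤ q := by
    have : 0 < p := hc.trans hcp
    rw [hqdef]
    positivity
  refine profit_sub_profit_le_of_eq_from hα.le hΛ.le hq hw0 hw1 hcp.le
    (fun i ↦ hL0.trans (switchSeq_mem_Icc hLH.le j i).1)
    (switchSeq_le_switchSeq hLH.le (Nat.le_succ j))
    (fun i ↦ (switchSeq_mem_Icc hLH.le (j + 1) i).2.trans hH1) hR11 ?_ hNN'
  intro i hi
  rw [switchSeq_of_le (by omega), switchSeq_of_le (by omega)]

/-- The marginal value of an extra high-level advertisement grows with the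
horizon: for `j + 1 ≤ N ≤ N'`,
`Π_{N'}(j+1) − Π_{N'}(j) ≥ Π_N(j+1) − Π_N(j)`. -/
theorem marginal_value_of_high_ad_grows_with_horizon
    (Λ c p cA m u α w L H R1 q : ℝ)
    (hΛ : 0 < Λ) (hc : 0 < c) (hcp : c < p) (hcA : 0 ≤ cA)
    (hm : 0 < m) (hu : 0 ≤ u) (hqdef : q = (u + p) / m) (hq1 : q < 1)
    (hα : 0 < α) (hw0 : 0 ≤ w) (hw1 : w ≤ 1)
    (hL0 : 0 ≤ L) (hLH : L < H) (hH1 : H ≤ 1)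
    (hR10 : 0 ≤ R1) (hR11 : R1 ≤ 1)
    (j N N' : ℕ) (hjN : j + 1 ≤ N) (hNN' : N ≤ N') :
    profit α w Λ q p c cA (switchSeq L H (j + 1)) R1 N -
        profit α w Λ q p c cA (switchSeq L H j) R1 N ≤
      profit α w Λ q p c cA (switchSeq L H (j + 1)) R1 N' -
        profit α w Λ q p c cA (switchSeq L H j) R1 N' :=
  marginal_value_of_high_ad_grows_with_horizon_general Λ c p cA m u α w L H R1 q hΛ hc hcp hm hu
    hqdef hα hw0 hw1 hL0 hLH hH1 hR11 j N N' hjN hNN'
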